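/- Let G be a connected bi-regular bipartite graph with n + m vertices and |E| edges, and let A_e be its directed edge matrix. Then 1 is an eigenvalue of A_e² with multiplicity at least 2|E| − 2(n+m) + 2. -/

import Mathlib

open SimpleGraph Matrix

/-- The directed edge matrix of a graph. -/
def edgeMatrix {V : Type*} [DecidableEq V] (G : SimpleGraph V) [DecidableRel G.Adj]
    (R : Type*) [Zero R] [One R] : Matrix G.Dart G.Dart R :=
  fun e f => if e.snd = f.fst ∧ f ≠ e.symm then 1 else 0

section Aux

variable {V : Type*} [Fintype V] [DecidableEq V] (G : SimpleGraph V) [DecidableRel G.Adj]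

/-- Sum of values over darts starting at `v`. -/
noncomputable def dartS : (G.Dart → ℂ) →ₗ[ℂ] (V → ℂ) where
  toFun φ := fun v => ∑ f ∈ Finset.univ.filter (fun f : G.Dart => f.fst = v), φ f
  map_add' φ ψ := by ext v; exact Finset.sum_add_distrib
  map_smul' c φ := by ext v; simp [Finset.mul_sum]

/-- Sum of values over darts ending at `v`. -/
noncomputable def dartT : (G.Dart → ℂ) →ₗ[ℂ] (V → ℂ) where
  toFun φ := fun v => ∑ f ∈ Finset.univ.filter (fun f : G.Dart => f.snd = v), φ f
  map_add' φ ψ := by ext v; exact Finset.sum_add_distrib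
  map_smul' c φ := by ext v; simp [Finset.mul_sum]

lemma dartS_apply (φ : G.Dart → ℂ) (v : V) :
    dartS G φ v = ∑ f ∈ Finset.univ.filter (fun f : G.Dart => f.fst = v), φ f := rfl

lemma dartT_apply (φ : G.Dart → ℂ) (v : V) :
    dartT G φ v = ∑ f ∈ Finset.univ.filter (fun f : G.Dart => f.snd = v), φ f := rfl

lemma edgeMatrix_mulVec (ψ : G.Dart → ℂ) (e : G.Dart) :
    (edgeMatrix G ℂ).mulVec ψ e =
      (∑ f ∈ Finset.univ.filter (fun f : G.Dart => f.fst = e.snd), ψ f) - ψ e.symm := by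
  classical
  have h2 : ψ e.symm = ∑ f : G.Dart, if f = e.symm then ψ f else 0 := by
    rw [Finset.sum_ite_eq' Finset.univ e.symm ψ]; simp
  rw [Finset.sum_filter, h2, ← Finset.sum_sub_distrib]
  unfold Matrix.mulVec dotProduct edgeMatrix
  refine Finset.sum_congr rfl fun f _ => ?_
  by_cases hf : f = e.symm
  · subst hf
    have h1 : e.symm.fst = e.snd := by simp
    have h0 : ¬ (e.snd = e.symm.fst ∧ e.symm ≠ e.symm) := by simp
    beta_reduce
    rw [if_neg h0, if_pos h1, if_pos rfl, zero_mul, sub_self]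
  · beta_reduce
    by_cases hf2 : f.fst = e.snd
    · rw [if_pos ⟨hf2.symm, hf⟩, if_pos hf2, if_neg hf, one_mul, sub_zero]
    · rw [if_neg (fun h => hf2 h.1.symm), if_neg hf2, if_neg hf, zero_mul, sub_zero]

lemma eigen_of_ker (φ : G.Dart → ℂ) (hS : dartS G φ = 0) (hT : dartT G φ = 0) :
    ((edgeMatrix G ℂ) ^ 2).mulVecLin φ = φ := by
  classical
  have hS' : ∀ v, ∑ f ∈ Finset.univ.filter (fun f : G.Dart => f.fst = v), φ f = 0 :=
    fun v => congrFun hS v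
  have hT' : ∀ v, ∑ f ∈ Finset.univ.filter (fun f : G.Dart => f.snd = v), φ f = 0 :=
    fun v => congrFun hT v
  have h1 : (edgeMatrix G ℂ).mulVec φ = fun e => -φ e.symm := by
    ext e
    rw [edgeMatrix_mulVec, hS' e.snd]
    ring
  rw [pow_two, Matrix.mulVecLin_mul]
  ext e
  simp only [LinearMap.comp_apply, Matrix.mulVecLin_apply]
  rw [h1, edgeMatrix_mulVec]
  have hmain : (∑ f ∈ Finset.univ.filter (fun f : G.Dart => f.fst = e.snd), -φ f.symm)
      = 0 := by
    rw [Finset.sum_neg_distrib]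
    rw [show (∑ f ∈ Finset.univ.filter (fun f : G.Dart => f.fst = e.snd), φ f.symm)
        = ∑ g ∈ Finset.univ.filter (fun g : G.Dart => g.snd = e.snd), φ g from ?_,
      hT' e.snd, neg_zero]
    refine Finset.sum_bij' (fun f _ => f.symm) (fun g _ => g.symm) ?_ ?_ ?_ ?_ ?_
    · intro a ha
      rw [Finset.mem_filter] at ha ⊢
      exact ⟨Finset.mem_univ _, by simp [ha.2]⟩
    · intro a ha
      rw [Finset.mem_filter] at ha ⊢
      exact ⟨Finset.mem_univ _, by simp [ha.2]⟩
    · intros; simp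
    · intros; simp
    · intros; rfl
  rw [hmain]
  simp

end Aux

/-- For a connected bi-regular bipartite graph with `n + m` vertices and `|E|` edges,
`1` is an eigenvalue of the square of the directed edge matrix with geometric
multiplicity at least `2|E| - 2(n + m) + 2`. -/
theorem one_eigenvalue_multiplicity_edgeMatrix_sq {U W : Type*}
    [Fintype U] [Fintype W] [DecidableEq U] [DecidableEq W]
    (G : SimpleGraph (U ⊕ W)) [DecidableRel G.Adj]
    (hbipL : ∀ u u' : U, ¬ G.Adj (Sum.inl u) (Sum.inl u'))
    (hbipR : ∀ w w' : W, ¬ G.Adj (Sum.inr w) (Sum.inr w'))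
    (hconn : G.Connected) (q₁ q₂ : ℕ) (hq₁ : 1 ≤ q₁) (hq₂ : 2 ≤ q₂)
    (hdegU : ∀ u : U, G.degree (Sum.inl u) = q₁ + 1)
    (hdegW : ∀ w : W, G.degree (Sum.inr w) = q₂ + 1) :
    2 * G.edgeFinset.card - 2 * (Fintype.card U + Fintype.card W) + 2 ≤
      Module.finrank ℂ
        (Module.End.eigenspace (((edgeMatrix G ℂ) ^ 2).mulVecLin) 1) := by
  classical
  -- nonemptiness of both sides
  have hU : Nonempty U := by
    obtain ⟨v⟩ := hconn.nonempty
    cases v with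
    | inl u => exact ⟨u⟩
    | inr w =>
      have hd : 0 < G.degree (Sum.inr w) := by rw [hdegW]; omega
      obtain ⟨v', hv'⟩ := (G.degree_pos_iff_exists_adj (Sum.inr w)).mp hd
      cases v' with
      | inl u => exact ⟨u⟩
      | inr w' => exact absurd hv' (hbipR w w')
  have hW : Nonempty W := by
    obtain ⟨v⟩ := hconn.nonempty
    cases v with
    | inr w => exact ⟨w⟩
    | inl u =>
      have hd : 0 < G.degree (Sum.inl u) := by rw [hdegU]; omega
      obtain ⟨v', hv'⟩ := (G.degree_pos_iff_exists_adj (Sum.inl u)).mp hd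
      cases v' with
      | inr w => exact ⟨w⟩
      | inl u' => exact absurd hv' (hbipL u u')
  -- bipartiteness on darts
  have hbip1 : ∀ f : G.Dart, (f.fst).isLeft = (f.snd).isRight := by
    intro f
    rcases h1 : f.fst with u | w <;> rcases h2 : f.snd with u' | w'
    · have := f.adj; rw [h1, h2] at this; exact absurd this (hbipL u u')
    · simp
    · simp
    · have := f.adj; rw [h1, h2] at this; exact absurd this (hbipR w w')
  have hbip2 : ∀ f : G.Dart, (f.fst).isRight = (f.snd).isLeft := by
    intro f
    have := hbip1 f
    rcases h1 : f.fst with u | w <;> rcases h2 : f.snd with u' | w' <;>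
      simp_all
  set L := (dartS G).prod (dartT G) with hLdef
  set F : (((U ⊕ W) → ℂ) × ((U ⊕ W) → ℂ)) →ₗ[ℂ] ℂ × ℂ :=
    { toFun := fun p => (∑ u : U, p.1 (Sum.inl u) - ∑ w : W, p.2 (Sum.inr w),
        ∑ w : W, p.1 (Sum.inr w) - ∑ u : U, p.2 (Sum.inl u)),
      map_add' := by
        intro p q
        simp only [Prod.fst_add, Prod.snd_add, Pi.add_apply, Prod.mk_add_mk, Prod.mk.injEq,
          Finset.sum_add_distrib]
        constructor <;> ring
      map_smul' := by
        intro c p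
        simp only [Prod.smul_fst, Prod.smul_snd, Pi.smul_apply, smul_eq_mul, RingHom.id_apply,
          Prod.smul_mk, Prod.mk.injEq]
        constructor <;> rw [mul_sub, Finset.mul_sum, Finset.mul_sum] } with hFdef
  -- the kernel of L is contained in the eigenspace
  have hKE : LinearMap.ker L ≤
      Module.End.eigenspace (((edgeMatrix G ℂ) ^ 2).mulVecLin) 1 := by
    intro φ hφ
    rw [LinearMap.mem_ker, hLdef, LinearMap.prod_apply, Function.prod, Prod.mk_eq_zero] at hφ
    rw [Module.End.mem_eigenspace_iff, one_smul]
    exact eigen_of_ker G φ hφ.1 hφ.2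
  -- the range of L is contained in the kernel of F
  have key : ∀ (φ : G.Dart → ℂ) (g : G.Dart → U ⊕ W),
      (∑ u : U, ∑ f ∈ Finset.univ.filter (fun f : G.Dart => g f = Sum.inl u), φ f)
        = ∑ f : G.Dart, if (g f).isLeft then φ f else 0 := by
    intro φ g
    simp_rw [Finset.sum_filter]
    rw [Finset.sum_comm]
    refine Finset.sum_congr rfl fun f _ => ?_
    rcases hgf : g f with u₀ | w₀
    · simp [hgf, Finset.sum_ite_eq]
    · simp [hgf]
  have key2 : ∀ (φ : G.Dart → ℂ) (g : G.Dart → U ⊕ W),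
      (∑ w : W, ∑ f ∈ Finset.univ.filter (fun f : G.Dart => g f = Sum.inr w), φ f)
        = ∑ f : G.Dart, if (g f).isRight then φ f else 0 := by
    intro φ g
    simp_rw [Finset.sum_filter]
    rw [Finset.sum_comm]
    refine Finset.sum_congr rfl fun f _ => ?_
    rcases hgf : g f with u₀ | w₀
    · simp [hgf]
    · simp [hgf, Finset.sum_ite_eq]
  have hrangele : LinearMap.range L ≤ LinearMap.ker F := by
    rintro x ⟨φ, rfl⟩
    rw [LinearMap.mem_ker, hLdef, LinearMap.prod_apply, Function.prod, hFdef]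
    simp only [LinearMap.coe_mk, AddHom.coe_mk, Prod.mk_eq_zero]
    simp_rw [dartS_apply, dartT_apply]
    rw [key φ (fun f => f.fst), key2 φ (fun f => f.snd),
      key2 φ (fun f => f.fst), key φ (fun f => f.snd)]
    constructor
    · rw [sub_eq_zero]
      exact Finset.sum_congr rfl fun f _ => by rw [hbip1 f]
    · rw [sub_eq_zero]
      exact Finset.sum_congr rfl fun f _ => by rw [hbip2 f]
  -- F is surjective
  have hFsurj : Function.Surjective F := by
    intro x
    obtain ⟨u₀⟩ := hU
    obtain ⟨w₀⟩ := hW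
    refine ⟨((fun v => (if v = Sum.inl u₀ then x.1 else 0) + (if v = Sum.inr w₀ then x.2 else 0)),
      0), ?_⟩
    rw [hFdef]
    simp only [LinearMap.coe_mk, AddHom.coe_mk, Pi.zero_apply, Finset.sum_const_zero, sub_zero,
      Finset.sum_add_distrib]
    have e1 : (∑ u : U, if Sum.inl u = (Sum.inl u₀ : U ⊕ W) then x.1 else 0) = x.1 := by
      simp [Sum.inl.injEq, Finset.sum_ite_eq']
    have e2 : (∑ u : U, if (Sum.inl u : U ⊕ W) = Sum.inr w₀ then x.2 else 0) = 0 := by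
      simp
    have e3 : (∑ w : W, if (Sum.inr w : U ⊕ W) = Sum.inl u₀ then x.1 else 0) = 0 := by
      simp
    have e4 : (∑ w : W, if Sum.inr w = (Sum.inr w₀ : U ⊕ W) then x.2 else 0) = x.2 := by
      simp [Sum.inr.injEq, Finset.sum_ite_eq']
    rw [e1, e2, e3, e4, add_zero, zero_add]
  -- dimension count
  have h1 : Module.finrank ℂ (LinearMap.range L) + Module.finrank ℂ (LinearMap.ker L)
      = 2 * G.edgeFinset.card := by
    rw [LinearMap.finrank_range_add_finrank_ker, Module.finrank_fintype_fun_eq_card,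
      G.dart_card_eq_twice_card_edges]
  have h2 : Module.finrank ℂ (LinearMap.range F) + Module.finrank ℂ (LinearMap.ker F)
      = 2 * (Fintype.card U + Fintype.card W) := by
    rw [LinearMap.finrank_range_add_finrank_ker, Module.finrank_prod,
      Module.finrank_fintype_fun_eq_card, Fintype.card_sum]
    ring
  have h3 : Module.finrank ℂ (LinearMap.range F) = 2 := by
    rw [LinearMap.range_eq_top.mpr hFsurj, finrank_top, Module.finrank_prod,
      Module.finrank_self]
  have h4 : Module.finrank ℂ (LinearMap.range L) ≤ Module.finrank ℂ (LinearMap.ker F) :=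
    Submodule.finrank_mono hrangele
  have h5 : Module.finrank ℂ (LinearMap.ker L) ≤
      Module.finrank ℂ (Module.End.eigenspace (((edgeMatrix G ℂ) ^ 2).mulVecLin) 1) :=
    Submodule.finrank_mono hKE
  have hdeg : 2 * (Fintype.card U + Fintype.card W) ≤ 2 * G.edgeFinset.card := by
    rw [← G.sum_degrees_eq_twice_card_edges]
    have hd2 : ∀ v : U ⊕ W, 2 ≤ G.degree v := by
      intro v
      cases v with
      | inl u => rw [hdegU]; omega
      | inr w => rw [hdegW]; omega
    calc 2 * (Fintype.card U + Fintype.card W) = ∑ _v : U ⊕ W, 2 := by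
          rw [Finset.sum_const, smul_eq_mul, Finset.card_univ, Fintype.card_sum]; ring
      _ ≤ ∑ v, G.degree v := Finset.sum_le_sum fun v _ => hd2 v
  omega
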